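/- arXiv:2305.16745 — 4 statements merged into one kernel-verified Lean document; each statement's English description precedes it below -/
import Mathlib

section
/- Let g : ℝ → ℝ be bounded, continuous and monotone increasing, let k ∈ L¹(ℝ), and suppose that for every absolutely continuous ψ : ℝ → ℝ with ψ′ ∈ L¹ one has (ψg)(−∞) − (ψg)(+∞) + ∫ ψ′(x)g(x) dx = −∫ ψ(x)k(x) dx (where (ψg)(±∞) denote the limits at ±∞, which exist). Then g is absolutely continuous with g(t) − g(−∞) = ∫_{−∞}^t k(x) dx for all t, and g′ = k almost everywhere. -/
/-! Testing the identity with `ψ = 1` gives `g(+∞) - g(-∞) = ∫ k`, and testing it with the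
primitive `ψ = ∫_{-∞}^· φ` of a test function `φ` turns it, after Fubini, into
`∫ φ g = ∫ φ (g(-∞) + ∫_{-∞}^· k)`. Hence `g = g(-∞) + ∫_{-∞}^· k` almost everywhere, and
everywhere by continuity; the Lebesgue differentiation theorem then gives `g' = k` a.e. -/

open MeasureTheory Filter Set Topology

section PrimitiveIic

variable {E : Type*} [NormedAddCommGroup E] [NormedSpace ℝ E] {f : ℝ → E}

theorem MeasureTheory.Integrable.integral_Iic_eq_add (hf : Integrable f) (a t : ℝ) :
    ∫ x in Iic t, f x = (∫ x in Iic a, f x) + ∫ x in a..t, f x := by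
  rw [← intervalIntegral.integral_Iic_sub_Iic hf.integrableOn hf.integrableOn, add_sub_cancel]

theorem MeasureTheory.Integrable.continuous_integral_Iic (hf : Integrable f) :
    Continuous fun t => ∫ x in Iic t, f x := by
  rw [funext (hf.integral_Iic_eq_add 0)]
  exact continuous_const.add
    (intervalIntegral.continuous_primitive (fun _ _ => hf.intervalIntegrable) 0)

theorem MeasureTheory.Integrable.hasDerivAt_integral_Iic [CompleteSpace E] (hf : Integrable f)
    {x : ℝ} (hx : ContinuousAt f x) : HasDerivAt (fun t => ∫ y in Iic t, f y) (f x) x := by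
  rw [funext (hf.integral_Iic_eq_add 0)]
  exact (intervalIntegral.integral_hasDerivAt_right hf.intervalIntegrable
    (hf.aestronglyMeasurable.stronglyMeasurableAtFilter) hx).const_add _

theorem MeasureTheory.Integrable.ae_hasDerivAt_integral_Iic [CompleteSpace E]
    (hf : Integrable f) : ∀ᵐ x, HasDerivAt (fun t => ∫ y in Iic t, f y) (f x) x := by
  rw [funext (hf.integral_Iic_eq_add 0)]
  filter_upwards [LocallyIntegrable.ae_hasDerivAt_integral hf.locallyIntegrable] with x hx
  exact (hx 0).const_add _

theorem MeasureTheory.Integrable.tendsto_integral_Iic_atBot (hf : Integrable f) :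
    Tendsto (fun t => ∫ x in Iic t, f x) atBot (𝓝 0) := by
  have h := (intervalIntegral_tendsto_integral_Iic 0 hf.integrableOn tendsto_id).const_sub
    (∫ x in Iic 0, f x)
  rw [sub_self] at h
  refine h.congr fun t => ?_
  rw [hf.integral_Iic_eq_add 0 t, intervalIntegral.integral_symm t 0, id, sub_eq_add_neg]

theorem MeasureTheory.Integrable.tendsto_integral_Iic_atTop (hf : Integrable f) :
    Tendsto (fun t => ∫ x in Iic t, f x) atTop (𝓝 (∫ x, f x)) := by
  have h := tendsto_setIntegral_of_monotone (μ := volume) (fun t => measurableSet_Iic)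
    (fun _ _ hst => Iic_subset_Iic.2 hst) (hf.integrableOn (s := ⋃ t : ℝ, Iic t))
  rwa [iUnion_Iic, setIntegral_univ] at h

theorem MeasureTheory.Integrable.norm_integral_Iic_le (hf : Integrable f) (t : ℝ) :
    ‖∫ x in Iic t, f x‖ ≤ ∫ x, ‖f x‖ :=
  (norm_integral_le_integral_norm f).trans
    (setIntegral_le_integral hf.norm (Eventually.of_forall fun _ => norm_nonneg _))

end PrimitiveIic

section RealPrimitiveIic

variable {φ k : ℝ → ℝ}

theorem MeasureTheory.Integrable.mul_integral_Iic (hφ : Integrable φ) (hk : Integrable k) :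
    Integrable fun x => φ x * ∫ y in Iic x, k y :=
  (hφ.bdd_mul (c := ∫ y, ‖k y‖) hk.continuous_integral_Iic.aestronglyMeasurable
    (Eventually.of_forall hk.norm_integral_Iic_le)).congr
    (Eventually.of_forall fun _ => mul_comm _ _)

theorem integral_mul_integral_Iic_add (hφ : Integrable φ) (hk : Integrable k) :
    (∫ x, φ x * ∫ y in Iic x, k y) + ∫ y, (∫ x in Iic y, φ x) * k y
      = (∫ x, φ x) * ∫ y, k y := by
  set F : ℝ × ℝ → ℝ := {p : ℝ × ℝ | p.2 ≤ p.1}.indicator fun p => φ p.1 * k p.2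
  have hF : Integrable F (volume.prod volume) :=
    (hφ.mul_prod hk).indicator (measurableSet_le measurable_snd measurable_fst)
  have h_inner (x : ℝ) : ∫ y, F (x, y) = φ x * ∫ y in Iic x, k y := by
    rw [← integral_const_mul, ← integral_indicator measurableSet_Iic]
    rfl
  have h_outer (y : ℝ) : ∫ x, F (x, y) = (∫ x in Ici y, φ x) * k y := by
    rw [← integral_mul_const, ← integral_indicator measurableSet_Ici]
    rfl
  have h_Ici (y : ℝ) : ∫ x in Ici y, φ x = (∫ x, φ x) - ∫ x in Iic y, φ x := by
    rw [integral_Ici_eq_integral_Ioi,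
      ← intervalIntegral.integral_Iic_add_Ioi hφ.integrableOn hφ.integrableOn, add_sub_cancel_left]
  have h_swap := integral_integral_swap (f := fun x y => F (x, y)) hF
  simp only [h_inner, h_outer, h_Ici, sub_mul] at h_swap
  rw [h_swap, integral_sub (hk.const_mul _) ((hk.mul_integral_Iic hφ).congr ?_),
    integral_const_mul, sub_add_cancel]
  exact Eventually.of_forall fun _ => by simp [mul_comm]

end RealPrimitiveIic

def IntegrationByPartsHolds (g k : ℝ → ℝ) : Prop :=
  ∀ (ψ ψ' : ℝ → ℝ) (A B : ℝ),
    (∀ x, HasDerivAt ψ (ψ' x) x) → Integrable ψ' →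
    Tendsto (fun x => ψ x * g x) atBot (𝓝 A) →
    Tendsto (fun x => ψ x * g x) atTop (𝓝 B) →
    A - B + ∫ x, ψ' x * g x = - ∫ x, ψ x * k x

namespace IntegrationByPartsHolds

variable {g k : ℝ → ℝ} {a b : ℝ}

theorem sub_eq_integral (h : IntegrationByPartsHolds g k)
    (ha : Tendsto g atBot (𝓝 a)) (hb : Tendsto g atTop (𝓝 b)) : b - a = ∫ x, k x := by
  have h1 := h (fun _ => 1) (fun _ => 0) a b (fun x => hasDerivAt_const x 1)
    (integrable_zero _ _ _) (by simpa using ha) (by simpa using hb)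
  simp only [zero_mul, integral_zero, add_zero, one_mul] at h1
  linarith

theorem integral_mul_eq (h : IntegrationByPartsHolds g k) (hk : Integrable k)
    (ha : Tendsto g atBot (𝓝 a)) (hb : Tendsto g atTop (𝓝 b))
    {φ : ℝ → ℝ} (hφc : Continuous φ) (hφi : Integrable φ) :
    ∫ x, φ x * g x = ∫ x, φ x * (a + ∫ y in Iic x, k y) := by
  have h_parts := h (fun y => ∫ x in Iic y, φ x) φ 0 ((∫ x, φ x) * b)
    (fun x => hφi.hasDerivAt_integral_Iic hφc.continuousAt) hφi
    (by simpa using hφi.tendsto_integral_Iic_atBot.mul ha)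
    (hφi.tendsto_integral_Iic_atTop.mul hb)
  have h_prim := integral_mul_integral_Iic_add hφi hk
  have h_lim := h.sub_eq_integral ha hb
  simp_rw [mul_add]
  rw [integral_add (hφi.const_mul a |>.congr (Eventually.of_forall fun _ => mul_comm _ _))
    (hφi.mul_integral_Iic hk), integral_mul_const]
  linear_combination h_parts - h_prim + (∫ x, φ x) * h_lim

theorem eq_add_integral_Iic (h : IntegrationByPartsHolds g k) (hgc : Continuous g)
    (hk : Integrable k) (ha : Tendsto g atBot (𝓝 a)) (hb : Tendsto g atTop (𝓝 b)) :
    g = fun t => a + ∫ x in Iic t, k x := by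
  have hK : Continuous fun t => a + ∫ x in Iic t, k x :=
    continuous_const.add hk.continuous_integral_Iic
  refine (hgc.ae_eq_iff_eq volume hK).1 <|
    ae_eq_of_integral_contDiff_smul_eq hgc.locallyIntegrable hK.locallyIntegrable ?_
  intro φ hφ hφs
  exact h.integral_mul_eq hk ha hb hφ.continuous (hφ.continuous.integrable_of_hasCompactSupport hφs)

end IntegrationByPartsHolds

/-- If `g` is bounded, continuous, monotone increasing, `k ∈ L¹`, and for every absolutely
continuous `ψ` with `ψ' ∈ L¹` one has
`(ψg)(−∞) − (ψg)(+∞) + ∫ ψ'(x)g(x) dx = −∫ ψ(x)k(x) dx`, then `g` is absolutely continuous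
with `g(t) − g(−∞) = ∫_{−∞}^t k` and `g' = k` a.e. -/
theorem stmt2 (g k : ℝ → ℝ)
    (hgb : ∃ C, ∀ x, |g x| ≤ C) (hgc : Continuous g) (hgm : Monotone g)
    (hk : Integrable k)
    (hyp : ∀ (ψ ψ' : ℝ → ℝ) (A B : ℝ),
      (∀ x, HasDerivAt ψ (ψ' x) x) → Integrable ψ' →
      Tendsto (fun x => ψ x * g x) atBot (nhds A) →
      Tendsto (fun x => ψ x * g x) atTop (nhds B) →
      A - B + ∫ x, ψ' x * g x = - ∫ x, ψ x * k x) :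
    ∃ gm : ℝ, Tendsto g atBot (nhds gm) ∧
      (∀ t, g t - gm = ∫ x in Set.Iic t, k x) ∧
      (∀ᵐ x : ℝ ∂volume, deriv g x = k x) := by
  obtain ⟨C, hC⟩ := hgb
  have hbdd : Bornology.IsBounded (range g) :=
    (Metric.isBounded_Icc (-C) C).subset (range_subset_iff.2 fun x => abs_le.1 (hC x))
  obtain ⟨gm, ha⟩ : ∃ gm, Tendsto g atBot (𝓝 gm) := ⟨_, tendsto_atBot_ciInf hgm hbdd.bddBelow⟩
  have hb := tendsto_atTop_ciSup hgm hbdd.bddAbove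
  have hg := IntegrationByPartsHolds.eq_add_integral_Iic hyp hgc hk ha hb
  refine ⟨gm, ha, fun t => by rw [hg, add_sub_cancel_left], ?_⟩
  filter_upwards [hk.ae_hasDerivAt_integral_Iic] with x hx
  rw [hg, (hx.const_add _).deriv]
end

section
/- Let g : ℝ → ℝ be monotone increasing and absolutely continuous, and suppose g⁻¹ (the inverse of g viewed as a bijection from ℝ onto the interval I = (g(−∞), g(∞)), assuming g is strictly increasing) is also absolutely continuous on I. Then g′(x) > 0 for almost every x ∈ ℝ. -/
open MeasureTheory intervalIntegral

lemma mono_deriv_nonneg' {g : ℝ → ℝ} (hg : Monotone g) {x d : ℝ} (hd : HasDerivAt g d x) :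
    0 ≤ d := by
  have h := hasDerivAt_iff_tendsto_slope.1 hd
  refine le_of_tendsto_of_tendsto tendsto_const_nhds h ?_
  filter_upwards [self_mem_nhdsWithin] with y (hy : y ≠ x)
  rw [slope_def_field]
  rcases lt_or_gt_of_ne hy with h1 | h1
  · { exact div_nonneg_of_nonpos (by simpa using hg h1.le) (by linarith) }
  · exact div_nonneg (by simpa using hg h1.le) (by linarith)

/-- If `g : ℝ → ℝ` is strictly increasing and absolutely continuous, and its inverse
(on the range of `g`) is absolutely continuous (in particular maps null subsets of the
range to null sets), then `g'(x) > 0` for almost every `x`. -/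
theorem stmt3 (g : ℝ → ℝ) (hg : StrictMono g) (hgc : Continuous g)
    (hac : ∀ a b : ℝ, g b - g a = ∫ x in a..b, deriv g x)
    (hinv : ∀ A : Set ℝ, A ⊆ Set.range g → volume A = 0 → volume (g ⁻¹' A) = 0) :
    ∀ᵐ x : ℝ ∂volume, 0 < deriv g x := by
  set Z : Set ℝ := {x | HasDerivAt g 0 x} with hZ
  have himg : volume (g '' Z) = 0 := by
    apply MeasureTheory.addHaar_image_eq_zero_of_det_fderivWithin_eq_zero volume
      (f' := fun _ => (0 : ℝ →L[ℝ] ℝ))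
    · intro x hx
      exact (hx.hasFDerivAt.hasFDerivWithinAt).congr_fderiv (by ext y; simp)
    · intro x _
      simp [ContinuousLinearMap.det]
  have hZ0 : volume Z = 0 := by
    have := hinv (g '' Z) (Set.image_subset_range _ _) himg
    exact measure_mono_null (Set.subset_preimage_image g Z) this
  have hdiff := hg.monotone.ae_differentiableAt
  rw [ae_iff]
  have hsub : {x | ¬ 0 < deriv g x} ⊆ Z ∪ {x | ¬ DifferentiableAt ℝ g x} := by
    intro x hx
    by_cases hd : DifferentiableAt ℝ g x
    · left
      have h1 : 0 ≤ deriv g x := mono_deriv_nonneg' hg.monotone hd.hasDerivAt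
      have h2 : deriv g x = 0 := le_antisymm (not_lt.1 hx) h1
      simpa [hZ, ← h2] using hd.hasDerivAt
    · right; exact hd
  refine measure_mono_null hsub (measure_union_null hZ0 ?_)
  simpa [ae_iff] using hdiff
end

section
/- Let g : ℝ → ℝ be bounded and measurable, x ∈ ℝ, r > 0, and set I_r(x) = (2r)^{−2} ∫_{|t|<r}∫_{|s|<r} (g(x+t) − g(x+s))/(t−s) dt ds. Then I_r(x) = ∫₀¹ w·log((1+w)/(1−w)) · (g(x+rw) − g(x−rw))/(2rw) dw. -/
/-!
Replace `u ↦ g (x + u)` by its right-continuous version `f`, which differs from it only on a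
countable set, and let `μ` be the Stieltjes measure of `f`. Every difference quotient of `f` is a
`μ`-integral, e.g. `(f t - f s) / (t - s) = ∫ 𝟙_{(s, t]}(u) / (t - s) dμ(u)` for `s < t`, so by
Tonelli both sides of the identity become integrals `∫ k(u) dμ(u)` of kernels obtained by
integrating out `s, t`, resp. `w`. Both kernels vanish outside `(-r, r)`, and elementary
logarithmic integrals evaluate them there as `2 K(u)` and `K(u) / (2 r²)` with `K = chordKernel r`,
which accounts for the factor `(2r)⁻²`.
-/

open MeasureTheory Set Real Interval

lemma ofReal_intervalIntegral_eq_lintegral_Ioo {f : ℝ → ℝ} {a b : ℝ} (hab : a ≤ b)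
    (hf : IntervalIntegrable f volume a b) (hnn : ∀ x ∈ Ioo a b, 0 ≤ f x) :
    ENNReal.ofReal (∫ x in a..b, f x) = ∫⁻ x in Ioo a b, ENNReal.ofReal (f x) := by
  rw [intervalIntegral.integral_of_le hab, integral_Ioc_eq_integral_Ioo,
    ofReal_integral_eq_lintegral_ofReal ((hf.1).mono_set Ioo_subset_Ioc_self)
      (ae_restrict_of_forall_mem measurableSet_Ioo hnn)]

lemma setLIntegral_Ioo_eq_add {f : ℝ → ENNReal} {a b c : ℝ} (hab : a < b) (hbc : b ≤ c) :
    ∫⁻ x in Ioo a c, f x = (∫⁻ x in Ioo a b, f x) + ∫⁻ x in Ioo b c, f x := calc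
  _ = ∫⁻ x in Ioo a b ∪ Ico b c, f x := by rw [Ioo_union_Ico_eq_Ioo hab hbc]
  _ = (∫⁻ x in Ioo a b, f x) + ∫⁻ x in Ico b c, f x := lintegral_union measurableSet_Ico
      ((Iio_disjoint_Ici le_rfl).mono Ioo_subset_Iio_self Ico_subset_Ici_self)
  _ = _ := by rw [← Measure.restrict_congr_set (Ioo_ae_eq_Ico (a := b) (b := c))]

lemma lintegral_lintegral_lintegral_comm {α β γ : Type*} [MeasurableSpace α] [MeasurableSpace β]
    [MeasurableSpace γ] {μ : Measure α} {ν : Measure β} {ρ : Measure γ} [SFinite μ] [SFinite ν]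
    [SFinite ρ] {F : α → β → γ → ENNReal}
    (hF : Measurable fun p : α × β × γ => F p.1 p.2.1 p.2.2) :
    ∫⁻ a, ∫⁻ b, ∫⁻ c, F a b c ∂ρ ∂ν ∂μ = ∫⁻ c, ∫⁻ a, ∫⁻ b, F a b c ∂ν ∂μ ∂ρ := calc
  _ = ∫⁻ a, ∫⁻ c, ∫⁻ b, F a b c ∂ν ∂ρ ∂μ := lintegral_congr fun _ =>
      lintegral_lintegral_swap (hF.comp (measurable_const.prodMk measurable_id)).aemeasurable
  _ = _ := lintegral_lintegral_swap (Measurable.lintegral_prod_right'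
      (hF.comp (measurable_fst.fst.prodMk (measurable_snd.prodMk measurable_fst.snd)))).aemeasurable

lemma Monotone.sub_div_sub_nonneg {f : ℝ → ℝ} (hf : Monotone f) (s t : ℝ) :
    0 ≤ (f t - f s) / (t - s) := by
  rcases le_total s t with h | h
  · exact div_nonneg (sub_nonneg.2 (hf h)) (sub_nonneg.2 h)
  · exact div_nonneg_of_nonpos (sub_nonpos.2 (hf h)) (sub_nonpos.2 h)

lemma Monotone.countable_stieltjesFunction_ne {f : ℝ → ℝ} (hf : Monotone f) :
    {u | hf.stieltjesFunction u ≠ f u}.Countable := by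
  refine hf.countable_not_continuousAt.mono ?_
  intro u hu hc
  apply hu
  exact hf.continuousWithinAt_Ioi_iff_rightLim_eq.1 (hc : ContinuousAt f u).continuousWithinAt

lemma integral_log_eq_negMulLog (a b : ℝ) :
    ∫ t in a..b, log t = negMulLog a - negMulLog b - b + a := by
  simp only [integral_log, negMulLog]; ring

lemma intervalIntegrable_log_add_const (c a b : ℝ) :
    IntervalIntegrable (fun t => log (t + c)) volume a b := by
  simpa using (intervalIntegral.intervalIntegrable_log' (a := a + c) (b := b + c)).comp_add_right c

lemma intervalIntegrable_log_const_sub (c a b : ℝ) :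
    IntervalIntegrable (fun t => log (c - t)) volume a b := by
  simpa using (intervalIntegral.intervalIntegrable_log' (a := c - a) (b := c - b)).comp_sub_left c

lemma log_one_add_div_one_sub_nonneg {w : ℝ} (hw : w ∈ Ioo 0 1) : 0 ≤ log ((1 + w) / (1 - w)) :=
  log_nonneg ((one_le_div (by linarith [hw.2])).2 (by linarith [hw.1]))

noncomputable def chordKernel (r u : ℝ) : ℝ :=
  negMulLog (r + u) + negMulLog (r - u) - negMulLog (2 * r)

lemma integral_log_add_sub_log_sub (r u : ℝ) :
    ∫ t in u..r, (log (t + r) - log (t - u)) = chordKernel r u := by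
  simp only [sub_eq_add_neg (_ : ℝ) u]
  rw [intervalIntegral.integral_sub (intervalIntegrable_log_add_const r u r)
      (intervalIntegrable_log_add_const (-u) u r),
    intervalIntegral.integral_comp_add_right log, intervalIntegral.integral_comp_add_right log,
    integral_log_eq_negMulLog, integral_log_eq_negMulLog, chordKernel]
  simp only [add_neg_cancel, negMulLog_zero]
  ring_nf

lemma integral_log_sub_sub_log_sub (r u : ℝ) :
    ∫ t in -r..u, (log (r - t) - log (u - t)) = chordKernel r u := by
  rw [intervalIntegral.integral_sub (intervalIntegrable_log_const_sub r (-r) u)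
      (intervalIntegrable_log_const_sub u (-r) u),
    intervalIntegral.integral_comp_sub_left log, intervalIntegral.integral_comp_sub_left log,
    integral_log_eq_negMulLog, integral_log_eq_negMulLog, chordKernel]
  simp only [sub_self, negMulLog_zero]
  ring_nf

lemma integral_log_one_add_sub_log_one_sub (c : ℝ) :
    ∫ w in c..1, (log (1 + w) - log (1 - w)) = chordKernel 1 c := by
  simp only [add_comm (1 : ℝ)]
  rw [intervalIntegral.integral_sub (intervalIntegrable_log_add_const 1 c 1)
      (intervalIntegrable_log_const_sub 1 c 1),
    intervalIntegral.integral_comp_add_right log, intervalIntegral.integral_comp_sub_left log,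
    integral_log_eq_negMulLog, integral_log_eq_negMulLog, chordKernel]
  simp only [sub_self, negMulLog_zero]
  ring_nf

lemma chordKernel_eq_mul {r : ℝ} (hr : r ≠ 0) (u : ℝ) :
    chordKernel r u = r * chordKernel 1 (u / r) := by
  rw [chordKernel, chordKernel, show r + u = r * (1 + u / r) by field_simp,
    show r - u = r * (1 - u / r) by field_simp, show 2 * r = r * 2 by ring,
    negMulLog_mul, negMulLog_mul, negMulLog_mul]
  ring_nf

lemma chordKernel_abs (r u : ℝ) : chordKernel r |u| = chordKernel r u := by
  rcases abs_choice u with h | h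
  · rw [h]
  · rw [h, chordKernel, chordKernel, sub_neg_eq_add, ← sub_eq_add_neg, add_comm (negMulLog _)]

lemma chordKernel_nonneg {r u : ℝ} (h₁ : -r ≤ u) (h₂ : u ≤ r) : 0 ≤ chordKernel r u := by
  rw [← integral_log_add_sub_log_sub, intervalIntegral.integral_of_le h₂]
  exact setIntegral_nonneg measurableSet_Ioc fun t ht =>
    sub_nonneg.2 (log_le_log (sub_pos.2 ht.1) (by linarith))

noncomputable def chordWeight (s t u : ℝ) : ENNReal :=
  (Ι s t).indicator (fun _ => ENNReal.ofReal |t - s|⁻¹) u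

lemma measurable_chordWeight :
    Measurable fun p : ℝ × ℝ × ℝ => chordWeight p.1 p.2.1 p.2.2 := by
  have hs : Measurable fun p : ℝ × ℝ × ℝ => p.1 := measurable_fst
  have ht : Measurable fun p : ℝ × ℝ × ℝ => p.2.1 := measurable_snd.fst
  have hu : Measurable fun p : ℝ × ℝ × ℝ => p.2.2 := measurable_snd.snd
  refine Measurable.ite ?_ (by fun_prop) measurable_const
  exact (measurableSet_lt (hs.min ht) hu).inter (measurableSet_le hu (hs.max ht))

lemma chordWeight_of_lt {s t u : ℝ} (hut : u < t) :
    chordWeight s t u = (Iio u).indicator (fun s => ENNReal.ofReal (t - s)⁻¹) s := by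
  by_cases hsu : s < u
  · rw [chordWeight, uIoc_of_le (hsu.trans hut).le, indicator_of_mem (mem_Ioc.2 ⟨hsu, hut.le⟩),
      indicator_of_mem (mem_Iio.2 hsu), abs_of_pos (sub_pos.2 (hsu.trans hut))]
  · have : u ∉ Ι s t := fun h => hsu (min_lt_iff.1 h.1 |>.resolve_right hut.not_gt)
    rw [chordWeight, indicator_of_notMem this, indicator_of_notMem (show s ∉ Iio u from hsu)]

lemma chordWeight_of_gt {s t u : ℝ} (htu : t < u) :
    chordWeight s t u = (Ici u).indicator (fun s => ENNReal.ofReal (s - t)⁻¹) s := by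
  by_cases hus : u ≤ s
  · rw [chordWeight, uIoc_of_ge (htu.trans_le hus).le, indicator_of_mem (mem_Ioc.2 ⟨htu, hus⟩),
      indicator_of_mem (mem_Ici.2 hus), abs_of_neg (sub_neg.2 (htu.trans_le hus)), neg_sub]
  · have : u ∉ Ι s t := fun h => hus (le_max_iff.1 h.2 |>.resolve_right htu.not_ge)
    rw [chordWeight, indicator_of_notMem this, indicator_of_notMem (show s ∉ Ici u from hus)]

lemma lintegral_chordWeight_of_lt {r t u : ℝ} (hu : u ∈ Ioo (-r) r) (hut : u < t) :
    ∫⁻ s in Ioo (-r) r, chordWeight s t u = ENNReal.ofReal (log (t + r) - log (t - u)) := by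
  simp_rw [chordWeight_of_lt hut]
  rw [lintegral_indicator measurableSet_Iio, Measure.restrict_restrict measurableSet_Iio,
    Iio_inter_Ioo, min_eq_left hu.2.le, ← ofReal_intervalIntegral_eq_lintegral_Ioo hu.1.le
      (intervalIntegral.intervalIntegrable_inv (fun s hs => by
        rw [uIcc_of_le hu.1.le] at hs; linarith [hs.2]) (by fun_prop))
      (fun s hs => inv_nonneg.2 (by linarith [hs.2]))]
  rw [intervalIntegral.integral_comp_sub_left (fun x => x⁻¹),
    integral_inv_of_pos (by linarith) (by linarith [hu.1]), sub_neg_eq_add,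
    log_div (by linarith [hu.1]) (by linarith)]

lemma lintegral_chordWeight_of_gt {r t u : ℝ} (hu : u ∈ Ioo (-r) r) (htu : t < u) :
    ∫⁻ s in Ioo (-r) r, chordWeight s t u = ENNReal.ofReal (log (r - t) - log (u - t)) := by
  simp_rw [chordWeight_of_gt htu]
  have hset : Ici u ∩ Ioo (-r) r = Ico u r := by
    ext s; simp only [mem_inter_iff, mem_Ici, mem_Ioo, mem_Ico]
    constructor
    · exact fun h => ⟨h.1, h.2.2⟩
    · exact fun h => ⟨h.1, hu.1.trans_le h.1, h.2⟩
  rw [lintegral_indicator measurableSet_Ici, Measure.restrict_restrict measurableSet_Ici, hset,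
    ← Measure.restrict_congr_set Ioo_ae_eq_Ico, ← ofReal_intervalIntegral_eq_lintegral_Ioo hu.2.le
      (intervalIntegral.intervalIntegrable_inv (fun s hs => by
        rw [uIcc_of_le hu.2.le] at hs; linarith [hs.1]) (by fun_prop))
      (fun s hs => inv_nonneg.2 (by linarith [hs.1]))]
  rw [intervalIntegral.integral_comp_sub_right (fun x => x⁻¹),
    integral_inv_of_pos (by linarith) (by linarith [hu.2]),
    log_div (by linarith [hu.2]) (by linarith)]

lemma lintegral_lintegral_chordWeight (r u : ℝ) :
    ∫⁻ t in Ioo (-r) r, ∫⁻ s in Ioo (-r) r, chordWeight s t u =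
      (Ioo (-r) r).indicator (fun u => ENNReal.ofReal (2 * chordKernel r u)) u := by
  by_cases hu : u ∈ Ioo (-r) r
  · have hlower : ∫⁻ t in Ioo (-r) u, ∫⁻ s in Ioo (-r) r, chordWeight s t u =
        ENNReal.ofReal (chordKernel r u) := by
      rw [setLIntegral_congr_fun measurableSet_Ioo fun t ht => lintegral_chordWeight_of_gt hu ht.2,
        ← ofReal_intervalIntegral_eq_lintegral_Ioo hu.1.le
          ((intervalIntegrable_log_const_sub r _ _).sub (intervalIntegrable_log_const_sub u _ _))
          fun t ht => sub_nonneg.2 (log_le_log (by linarith [ht.2]) (by linarith [hu.2])),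
        integral_log_sub_sub_log_sub]
    have hupper : ∫⁻ t in Ioo u r, ∫⁻ s in Ioo (-r) r, chordWeight s t u =
        ENNReal.ofReal (chordKernel r u) := by
      have hint : IntervalIntegrable (fun t => log (t - u)) volume u r := by
        simpa only [sub_eq_add_neg] using intervalIntegrable_log_add_const (-u) u r
      rw [setLIntegral_congr_fun measurableSet_Ioo fun t ht => lintegral_chordWeight_of_lt hu ht.1,
        ← ofReal_intervalIntegral_eq_lintegral_Ioo hu.2.le
          ((intervalIntegrable_log_add_const r _ _).sub hint)
          fun t ht => sub_nonneg.2 (log_le_log (by linarith [ht.1]) (by linarith [hu.1])),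
        integral_log_add_sub_log_sub]
    have hK := chordKernel_nonneg hu.1.le hu.2.le
    rw [indicator_of_mem hu, setLIntegral_Ioo_eq_add hu.1 hu.2.le, hlower, hupper,
      ← ENNReal.ofReal_add hK hK, two_mul]
  · have h0 : ∀ t ∈ Ioo (-r) r, ∫⁻ s in Ioo (-r) r, chordWeight s t u = 0 := fun t ht =>
      (setLIntegral_congr_fun measurableSet_Ioo fun s hs => indicator_of_notMem (fun h =>
        hu ⟨(lt_min hs.1 ht.1).trans h.1, h.2.trans_lt (max_lt hs.2 ht.2)⟩) _).trans lintegral_zero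
    rw [indicator_of_notMem hu, setLIntegral_congr_fun measurableSet_Ioo h0, lintegral_zero]

noncomputable def symmetricWeight (r w u : ℝ) : ENNReal :=
  (Ioc (-(r * w)) (r * w)).indicator (fun _ => ENNReal.ofReal (log ((1 + w) / (1 - w)) / (2 * r))) u

lemma measurable_symmetricWeight (r : ℝ) :
    Measurable fun p : ℝ × ℝ => symmetricWeight r p.1 p.2 := by
  refine Measurable.ite ?_ (by fun_prop) measurable_const
  exact (measurableSet_lt (by fun_prop) measurable_snd).inter
    (measurableSet_le measurable_snd (by fun_prop))

lemma symmetricWeight_of_ne {r w u : ℝ} (hr : 0 < r) (hw : w ≠ |u| / r) :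
    symmetricWeight r w u = (Ioi (|u| / r)).indicator
      (fun w => ENNReal.ofReal (log ((1 + w) / (1 - w)) / (2 * r))) w := by
  rcases lt_or_gt_of_ne hw with hlt | hgt
  · have : u ∉ Ioc (-(r * w)) (r * w) := fun h =>
      (abs_le.2 ⟨by linarith [h.1], h.2⟩).not_gt ((lt_div_iff₀' hr).1 hlt)
    rw [symmetricWeight, indicator_of_notMem this,
      indicator_of_notMem (show w ∉ Ioi _ from not_lt.2 hlt.le)]
  · have h := abs_lt.1 ((div_lt_iff₀' hr).1 hgt)
    rw [symmetricWeight, indicator_of_mem (mem_Ioc.2 ⟨by linarith, h.2.le⟩),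
      indicator_of_mem (mem_Ioi.2 hgt)]

lemma lintegral_symmetricWeight_eq_lintegral_Ioo {r : ℝ} (hr : 0 < r) (u : ℝ) :
    ∫⁻ w in Ioo 0 1, symmetricWeight r w u =
      ∫⁻ w in Ioo (|u| / r) 1, ENNReal.ofReal (log ((1 + w) / (1 - w)) / (2 * r)) := by
  have hset : Ioi (|u| / r) ∩ Ioo 0 1 = Ioo (|u| / r) 1 := by
    ext w; simp only [mem_inter_iff, mem_Ioi, mem_Ioo]
    exact ⟨fun h => ⟨h.1, h.2.2⟩, fun h => ⟨h.1, (by positivity : 0 ≤ |u| / r).trans_lt h.1, h.2⟩⟩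
  rw [lintegral_congr_ae (ae_restrict_of_ae (((countable_singleton _).ae_notMem volume).mono
      fun w hw => symmetricWeight_of_ne hr hw)),
    lintegral_indicator measurableSet_Ioi, Measure.restrict_restrict measurableSet_Ioi, hset]

lemma lintegral_symmetricWeight {r : ℝ} (hr : 0 < r) (u : ℝ) :
    ∫⁻ w in Ioo 0 1, symmetricWeight r w u =
      (Ioo (-r) r).indicator (fun u => ENNReal.ofReal (chordKernel r u / (2 * r ^ 2))) u := by
  rw [lintegral_symmetricWeight_eq_lintegral_Ioo hr]
  by_cases hu : u ∈ Ioo (-r) r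
  · have hc : |u| / r < 1 := (div_lt_one hr).2 (abs_lt.2 hu)
    have hlog : ∀ w ∈ Ioo (|u| / r) 1, ENNReal.ofReal (log ((1 + w) / (1 - w)) / (2 * r)) =
        ENNReal.ofReal ((log (1 + w) - log (1 - w)) / (2 * r)) := fun w hw => by
      rw [log_div (by linarith [hw.1, (by positivity : 0 ≤ |u| / r)]) (by linarith [hw.2])]
    have hint : IntervalIntegrable (fun w => log (1 + w)) volume (|u| / r) 1 := by
      simpa only [add_comm] using intervalIntegrable_log_add_const 1 (|u| / r) 1
    rw [setLIntegral_congr_fun measurableSet_Ioo hlog,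
      ← ofReal_intervalIntegral_eq_lintegral_Ioo hc.le
        ((hint.sub (intervalIntegrable_log_const_sub 1 _ 1)).div_const _)
        fun w hw => div_nonneg (sub_nonneg.2 (log_le_log (by linarith [hw.2])
          (by linarith [hw.1, (by positivity : 0 ≤ |u| / r)]))) (by positivity),
      intervalIntegral.integral_div, integral_log_one_add_sub_log_one_sub, indicator_of_mem hu,
      ← chordKernel_abs r u, chordKernel_eq_mul hr.ne']
    congr 1
    field_simp
  · have hc : 1 ≤ |u| / r := (one_le_div hr).2 (not_lt.1 fun h => hu (abs_lt.1 h))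
    rw [Ioo_eq_empty hc.not_gt, Measure.restrict_empty, lintegral_zero_measure,
      indicator_of_notMem hu]

namespace StieltjesFunction

variable (f : StieltjesFunction ℝ)

lemma ofReal_mul_sub_eq_lintegral {c : ℝ} (hc : 0 ≤ c) (a b : ℝ) :
    ENNReal.ofReal (c * (f b - f a)) =
      ∫⁻ u, (Ioc a b).indicator (fun _ => ENNReal.ofReal c) u ∂f.measure := by
  rw [lintegral_indicator_const measurableSet_Ioc, f.measure_Ioc, ENNReal.ofReal_mul hc]

lemma ofReal_sub_div_sub_eq_lintegral (s t : ℝ) :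
    ENNReal.ofReal ((f t - f s) / (t - s)) = ∫⁻ u, chordWeight s t u ∂f.measure := by
  have hslope : (f t - f s) / (t - s) = |t - s|⁻¹ * (f (max s t) - f (min s t)) := by
    rcases le_total s t with h | h
    · rw [max_eq_right h, min_eq_left h, abs_of_nonneg (sub_nonneg.2 h), div_eq_inv_mul]
    · rw [max_eq_left h, min_eq_right h, abs_of_nonpos (sub_nonpos.2 h), inv_neg, neg_mul,
        ← mul_neg, neg_sub, div_eq_inv_mul]
  rw [hslope, f.ofReal_mul_sub_eq_lintegral (inv_nonneg.2 (abs_nonneg _))]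
  rfl

lemma lintegral_lintegral_ofReal_sub_div_sub (r : ℝ) :
    ∫⁻ t in Ioo (-r) r, ∫⁻ s in Ioo (-r) r, ENNReal.ofReal ((f t - f s) / (t - s)) =
      ∫⁻ u in Ioo (-r) r, ENNReal.ofReal (2 * chordKernel r u) ∂f.measure := by
  simp_rw [f.ofReal_sub_div_sub_eq_lintegral]
  rw [lintegral_lintegral_lintegral_comm (F := fun t s u => chordWeight s t u)
    (measurable_chordWeight.comp (measurable_snd.fst.prodMk (measurable_fst.prodMk
      measurable_snd.snd)))]
  simp_rw [lintegral_lintegral_chordWeight]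
  rw [lintegral_indicator measurableSet_Ioo]

lemma integral_integral_sub_div_sub (r : ℝ) :
    ∫ t in Ioo (-r) r, ∫ s in Ioo (-r) r, (f t - f s) / (t - s) =
      (∫⁻ u in Ioo (-r) r, ENNReal.ofReal (2 * chordKernel r u) ∂f.measure).toReal := by
  have hmeas : Measurable fun p : ℝ × ℝ => (f p.1 - f p.2) / (p.1 - p.2) :=
    ((f.mono.measurable.comp measurable_fst).sub (f.mono.measurable.comp measurable_snd)).div
      (measurable_fst.sub measurable_snd)
  have hinner : Measurable fun t => ∫⁻ s in Ioo (-r) r, ENNReal.ofReal ((f t - f s) / (t - s)) :=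
    hmeas.ennreal_ofReal.lintegral_prod_right'
  have hfinite : ∫⁻ t in Ioo (-r) r, ∫⁻ s in Ioo (-r) r, ENNReal.ofReal ((f t - f s) / (t - s))
      ≠ ⊤ := by
    rw [f.lintegral_lintegral_ofReal_sub_div_sub]
    refine (Integrable.lintegral_lt_top ?_).ne
    exact ((continuous_const.mul (by unfold chordKernel; fun_prop)).integrableOn_Icc).mono_set
      Ioo_subset_Icc_self
  calc ∫ t in Ioo (-r) r, ∫ s in Ioo (-r) r, (f t - f s) / (t - s)
      = ∫ t in Ioo (-r) r,
          (∫⁻ s in Ioo (-r) r, ENNReal.ofReal ((f t - f s) / (t - s))).toReal := by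
        refine integral_congr_ae (Filter.Eventually.of_forall fun t => ?_)
        exact integral_eq_lintegral_of_nonneg_ae
          (Filter.Eventually.of_forall (f.mono.sub_div_sub_nonneg · t))
          (hmeas.comp (measurable_const.prodMk measurable_id)).aestronglyMeasurable
    _ = _ := by
        rw [integral_toReal hinner.aemeasurable (ae_lt_top hinner hfinite),
          f.lintegral_lintegral_ofReal_sub_div_sub]

lemma lintegral_ofReal_symmetric_sub {r : ℝ} (hr : 0 < r) :
    ∫⁻ w in Ioo 0 1, ENNReal.ofReal
        (w * log ((1 + w) / (1 - w)) * ((f (r * w) - f (-(r * w))) / (2 * r * w))) =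
      ∫⁻ u in Ioo (-r) r, ENNReal.ofReal (chordKernel r u / (2 * r ^ 2)) ∂f.measure := by
  have hweight : ∀ w ∈ Ioo (0 : ℝ) 1, ENNReal.ofReal
      (w * log ((1 + w) / (1 - w)) * ((f (r * w) - f (-(r * w))) / (2 * r * w))) =
        ∫⁻ u, symmetricWeight r w u ∂f.measure := fun w hw => by
    refine (congrArg ENNReal.ofReal ?_).trans (f.ofReal_mul_sub_eq_lintegral
      (div_nonneg (log_one_add_div_one_sub_nonneg hw) (by positivity)) _ _)
    have := hw.1.ne'
    field_simp
  rw [setLIntegral_congr_fun measurableSet_Ioo hweight,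
    lintegral_lintegral_swap (measurable_symmetricWeight r).aemeasurable]
  simp_rw [lintegral_symmetricWeight hr]
  rw [lintegral_indicator measurableSet_Ioo]

lemma intervalIntegral_symmetric_sub {r : ℝ} (hr : 0 < r) :
    ∫ w in (0 : ℝ)..1, w * log ((1 + w) / (1 - w)) * ((f (r * w) - f (-(r * w))) / (2 * r * w)) =
      (∫⁻ u in Ioo (-r) r, ENNReal.ofReal (chordKernel r u / (2 * r ^ 2)) ∂f.measure).toReal := by
  have hmeas : Measurable fun w : ℝ =>
      w * log ((1 + w) / (1 - w)) * ((f (r * w) - f (-(r * w))) / (2 * r * w)) := by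
    have := f.mono.measurable
    fun_prop
  rw [intervalIntegral.integral_of_le zero_le_one, integral_Ioc_eq_integral_Ioo,
    integral_eq_lintegral_of_nonneg_ae (ae_restrict_of_forall_mem measurableSet_Ioo fun w hw =>
      mul_nonneg (mul_nonneg hw.1.le (log_one_add_div_one_sub_nonneg hw))
        (div_nonneg (sub_nonneg.2 (f.mono (by nlinarith [hw.1]))) (by nlinarith [hw.1])))
      hmeas.aestronglyMeasurable, f.lintegral_ofReal_symmetric_sub hr]

theorem averaged_sub_div_sub_eq {r : ℝ} (hr : 0 < r) :
    ((2 * r) ^ 2)⁻¹ * ∫ t in Ioo (-r) r, ∫ s in Ioo (-r) r, (f t - f s) / (t - s) =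
      ∫ w in (0 : ℝ)..1,
        w * log ((1 + w) / (1 - w)) * ((f (r * w) - f (-(r * w))) / (2 * r * w)) := by
  have hkernel : ∀ u, ENNReal.ofReal (2 * chordKernel r u) =
      ENNReal.ofReal ((2 * r) ^ 2) * ENNReal.ofReal (chordKernel r u / (2 * r ^ 2)) := fun u => by
    rw [← ENNReal.ofReal_mul (by positivity)]
    congr 1
    field_simp
  rw [f.integral_integral_sub_div_sub, f.intervalIntegral_symmetric_sub hr]
  simp_rw [hkernel]
  rw [lintegral_const_mul' _ _ ENNReal.ofReal_ne_top, ENNReal.toReal_mul,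
    ENNReal.toReal_ofReal (by positivity), inv_mul_cancel_left₀ (by positivity)]

end StieltjesFunction

theorem stmt10_general (g : ℝ → ℝ) (hg : Monotone g)
    (x r : ℝ) (hr : 0 < r) :
    ((2 * r) ^ 2)⁻¹ *
        (∫ t in Set.Ioo (-r) r, ∫ s in Set.Ioo (-r) r, (g (x + t) - g (x + s)) / (t - s)) =
      ∫ w in (0:ℝ)..1,
        (w * Real.log ((1 + w) / (1 - w))) * ((g (x + r * w) - g (x - r * w)) / (2 * r * w)) := by
  have hmono : Monotone fun u => g (x + u) := fun a b hab => hg (by linarith)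
  set f := hmono.stieltjesFunction
  have hbad := hmono.countable_stieltjesFunction_ne
  have hae : ∀ᵐ u, f u = g (x + u) :=
    (hbad.ae_notMem volume).mono fun _ hu => not_not.1 hu
  have hae_pos : ∀ᵐ w, f (r * w) = g (x + r * w) :=
    ((hbad.preimage (mul_right_injective₀ hr.ne')).ae_notMem volume).mono fun _ hw => not_not.1 hw
  have hae_neg : ∀ᵐ w, f (-(r * w)) = g (x - r * w) :=
    ((hbad.preimage (neg_injective.comp (mul_right_injective₀ hr.ne'))).ae_notMem volume).mono
      fun w hw => (not_not.1 hw).trans (by rw [sub_eq_add_neg]; rfl)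
  have hlhs : ∫ t in Ioo (-r) r, ∫ s in Ioo (-r) r, (g (x + t) - g (x + s)) / (t - s) =
      ∫ t in Ioo (-r) r, ∫ s in Ioo (-r) r, (f t - f s) / (t - s) :=
    integral_congr_ae (ae_restrict_of_ae (hae.mono fun t ht => integral_congr_ae
      (ae_restrict_of_ae (hae.mono fun s hs => by simp only [ht, hs]))))
  have hrhs : ∫ w in (0:ℝ)..1,
        w * log ((1 + w) / (1 - w)) * ((g (x + r * w) - g (x - r * w)) / (2 * r * w)) =
      ∫ w in (0:ℝ)..1, w * log ((1 + w) / (1 - w)) * ((f (r * w) - f (-(r * w))) / (2 * r * w)) :=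
    intervalIntegral.integral_congr_ae ((hae_pos.and hae_neg).mono fun w hw _ => by
      rw [hw.1, hw.2])
  rw [hlhs, hrhs, f.averaged_sub_div_sub_eq hr]

/-- For bounded monotone `g`, `x ∈ ℝ` and `r > 0`,
`(2r)^{−2} ∫_{|t|<r}∫_{|s|<r} (g(x+t)−g(x+s))/(t−s) dt ds
  = ∫₀¹ w log((1+w)/(1−w)) (g(x+rw)−g(x−rw))/(2rw) dw`. -/
theorem stmt10 (g : ℝ → ℝ) (hg : Monotone g) (hgb : ∃ C, ∀ x, |g x| ≤ C)
    (x r : ℝ) (hr : 0 < r) :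
    ((2 * r) ^ 2)⁻¹ *
        (∫ t in Set.Ioo (-r) r, ∫ s in Set.Ioo (-r) r, (g (x + t) - g (x + s)) / (t - s)) =
      ∫ w in (0:ℝ)..1,
        (w * Real.log ((1 + w) / (1 - w))) * ((g (x + r * w) - g (x - r * w)) / (2 * r * w)) :=
  stmt10_general g hg x r hr
end

section
/- Let K^{1/2} be the positive square root of a positive trace-class operator K on L²(ℝ), and suppose e^{bP/2}K^{1/2} and K^{1/2}e^{bP/2} are Hilbert–Schmidt (where P = −i d/dx), i.e., tr(K^{1/2} e^{bP} K^{1/2}) < ∞ for all 0 ≤ b < 2a. Then the function z ↦ tr(K^{1/2} e^{−iPz} K^{1/2}) is analytic in the strip 0 < Im z < 2a and continuous on 0 ≤ Im z < 2a. -/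
open MeasureTheory Complex

/-!
Since `‖exp (-I ξ z)‖ = exp (ξ Im z)` and `exp (t ξ) ≤ 1 + exp (b ξ)` for `0 ≤ t ≤ b`, the
integrand is dominated by `(1 + exp (b ξ)) |ρ ξ|` on the strip `0 ≤ Im z ≤ b`, which gives
continuity by dominated convergence. Its `z`-derivative carries an extra factor `ξ`, and
`|ξ| exp (t ξ) ≤ (exp ((t + δ) ξ) + exp ((t - δ) ξ)) / δ` absorbs it into the same majorant
as long as `Im z` stays `δ` away from both edges, which gives holomorphy in the open strip.
-/

namespace FourierLaplace

lemma norm_cexp_neg_I_mul (ξ : ℝ) (z : ℂ) : ‖cexp (-I * ξ * z)‖ = Real.exp (z.im * ξ) := by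
  rw [Complex.norm_exp]
  congr 1
  simp [Complex.mul_re, mul_comm]

lemma exp_mul_le_one_add_exp_mul {t b : ℝ} (ht : 0 ≤ t) (htb : t ≤ b) (ξ : ℝ) :
    Real.exp (t * ξ) ≤ 1 + Real.exp (b * ξ) := by
  rcases le_total 0 ξ with hξ | hξ
  · linarith [Real.exp_le_exp.2 (mul_le_mul_of_nonneg_right htb hξ), Real.exp_pos 0]
  · linarith [Real.exp_le_one_iff.2 (mul_nonpos_of_nonneg_of_nonpos ht hξ), Real.exp_pos (b * ξ)]

lemma abs_mul_exp_mul_le {t δ : ℝ} (hδ : 0 < δ) (ξ : ℝ) :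
    |ξ| * Real.exp (t * ξ) ≤ (Real.exp ((t + δ) * ξ) + Real.exp ((t - δ) * ξ)) / δ := by
  have hlin : δ * |ξ| ≤ Real.exp (δ * ξ) + Real.exp (-(δ * ξ)) := by
    calc δ * |ξ| ≤ Real.exp |δ * ξ| := by
          rw [abs_mul, abs_of_pos hδ]; linarith [Real.add_one_le_exp (δ * |ξ|)]
      _ ≤ _ := Real.exp_abs_le _
  have hsum : (Real.exp (δ * ξ) + Real.exp (-(δ * ξ))) * Real.exp (t * ξ) =
      Real.exp ((t + δ) * ξ) + Real.exp ((t - δ) * ξ) := by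
    rw [add_mul, ← Real.exp_add, ← Real.exp_add]
    ring_nf
  rw [le_div_iff₀ hδ, ← hsum]
  calc |ξ| * Real.exp (t * ξ) * δ = δ * |ξ| * Real.exp (t * ξ) := by ring
    _ ≤ _ := by gcongr

section Strip

variable {ρ : ℝ → ℝ} {b : ℝ}

lemma integrable_one_add_exp_mul_mul_abs (hρ : Integrable ρ)
    (hb : Integrable fun ξ => Real.exp (b * ξ) * ρ ξ) :
    Integrable fun ξ => (1 + Real.exp (b * ξ)) * |ρ ξ| := by
  refine (hρ.abs.add hb.abs).congr (Filter.Eventually.of_forall fun ξ => ?_)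
  simp only [Pi.add_apply, abs_mul, Real.abs_exp]
  ring

lemma aestronglyMeasurable_cexp_mul (hρ : Integrable ρ) (z : ℂ) :
    AEStronglyMeasurable (fun ξ : ℝ => cexp (-I * ξ * z) * ρ ξ) := by
  refine Continuous.aestronglyMeasurable ?_ |>.mul ?_
  · fun_prop
  · exact continuous_ofReal.comp_aestronglyMeasurable hρ.1

lemma norm_cexp_mul_le {z : ℂ} (h0 : 0 ≤ z.im) (hb : z.im ≤ b) (ξ : ℝ) :
    ‖cexp (-I * ξ * z) * ρ ξ‖ ≤ (1 + Real.exp (b * ξ)) * |ρ ξ| := by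
  rw [norm_mul, norm_cexp_neg_I_mul, norm_real, Real.norm_eq_abs]
  gcongr
  exact exp_mul_le_one_add_exp_mul h0 hb ξ

lemma integrable_cexp_mul (hρ : Integrable ρ) (hb : Integrable fun ξ => Real.exp (b * ξ) * ρ ξ)
    {z : ℂ} (h0 : 0 ≤ z.im) (hzb : z.im ≤ b) :
    Integrable fun ξ : ℝ => cexp (-I * ξ * z) * ρ ξ :=
  (integrable_one_add_exp_mul_mul_abs hρ hb).mono' (aestronglyMeasurable_cexp_mul hρ z)
    (Filter.Eventually.of_forall (norm_cexp_mul_le h0 hzb))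

lemma norm_deriv_cexp_mul_le {δ : ℝ} (hδ : 0 < δ) {z : ℂ} (h0 : δ ≤ z.im) (hb : z.im + δ ≤ b)
    (ξ : ℝ) :
    ‖-I * ξ * cexp (-I * ξ * z) * ρ ξ‖ ≤ 2 / δ * ((1 + Real.exp (b * ξ)) * |ρ ξ|) := by
  have hexp : |ξ| * Real.exp (z.im * ξ) ≤ 2 / δ * (1 + Real.exp (b * ξ)) := by
    calc |ξ| * Real.exp (z.im * ξ)
        ≤ (Real.exp ((z.im + δ) * ξ) + Real.exp ((z.im - δ) * ξ)) / δ := abs_mul_exp_mul_le hδ ξ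
      _ ≤ 2 * (1 + Real.exp (b * ξ)) / δ := by
        gcongr
        linarith [exp_mul_le_one_add_exp_mul (by linarith) hb ξ,
          exp_mul_le_one_add_exp_mul (sub_nonneg.2 h0) (by linarith) ξ]
      _ = _ := by ring
  calc ‖-I * ξ * cexp (-I * ξ * z) * ρ ξ‖ = |ξ| * Real.exp (z.im * ξ) * |ρ ξ| := by
        simp only [norm_mul, norm_neg, norm_I, norm_real, Real.norm_eq_abs, one_mul,
          norm_cexp_neg_I_mul]
    _ ≤ _ := by rw [← mul_assoc]; gcongr

lemma hasDerivAt_cexp_mul (ξ r : ℝ) (z : ℂ) :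
    HasDerivAt (fun w : ℂ => cexp (-I * ξ * w) * r) (-I * ξ * cexp (-I * ξ * z) * r) z := by
  have hlin : HasDerivAt (fun w : ℂ => -I * ξ * w) (-I * ξ) z := by
    simpa using (hasDerivAt_id z).const_mul (-I * (ξ : ℂ))
  simpa only [mul_comm (cexp _)] using hlin.cexp.mul_const (r : ℂ)

theorem differentiableAt_integral_cexp_mul (hρ : Integrable ρ)
    (hb : Integrable fun ξ => Real.exp (b * ξ) * ρ ξ) {z : ℂ} (h0 : 0 < z.im) (hzb : z.im < b) :
    DifferentiableAt ℂ (fun w : ℂ => ∫ ξ : ℝ, cexp (-I * ξ * w) * ρ ξ) z := by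
  set ε := min z.im (b - z.im) / 2 with hε_def
  have hε : 0 < ε := by positivity
  have hεz : 2 * ε ≤ z.im := by linarith [min_le_left z.im (b - z.im)]
  have hεb : 2 * ε ≤ b - z.im := by linarith [min_le_right z.im (b - z.im)]
  have hball : ∀ w ∈ Metric.ball z ε, ε ≤ w.im ∧ w.im + ε ≤ b := fun w hw => by
    have := (abs_im_le_norm (w - z)).trans_lt (mem_ball_iff_norm.1 hw)
    rw [sub_im, abs_lt] at this
    constructor <;> linarith
  refine (hasDerivAt_integral_of_dominated_loc_of_deriv_le
    (F' := fun w ξ => -I * ξ * cexp (-I * ξ * w) * ρ ξ) (Metric.ball_mem_nhds z hε)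
    (Filter.Eventually.of_forall (aestronglyMeasurable_cexp_mul hρ))
    (integrable_cexp_mul hρ hb h0.le hzb.le) ?_
    (Filter.Eventually.of_forall fun ξ w hw =>
      norm_deriv_cexp_mul_le hε (hball w hw).1 (hball w hw).2 ξ)
    ((integrable_one_add_exp_mul_mul_abs hρ hb).const_mul _)
    (Filter.Eventually.of_forall fun ξ w _ => hasDerivAt_cexp_mul ξ (ρ ξ) w)).2.differentiableAt
  exact (Continuous.aestronglyMeasurable (by fun_prop)).mul
    (continuous_ofReal.comp_aestronglyMeasurable hρ.1)

theorem continuousWithinAt_integral_cexp_mul (hρ : Integrable ρ)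
    (hb : Integrable fun ξ => Real.exp (b * ξ) * ρ ξ) {z : ℂ} (hzb : z.im < b) :
    ContinuousWithinAt (fun w : ℂ => ∫ ξ : ℝ, cexp (-I * ξ * w) * ρ ξ) {w | 0 ≤ w.im} z := by
  have hnear : ∀ᶠ w in nhdsWithin z {w : ℂ | 0 ≤ w.im}, 0 ≤ w.im ∧ w.im < b :=
    (eventually_nhdsWithin_of_forall fun w hw => hw).and
      (continuous_im.continuousAt.eventually_lt continuousAt_const hzb |>.filter_mono
        nhdsWithin_le_nhds)
  refine tendsto_integral_filter_of_dominated_convergence _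
    (Filter.Eventually.of_forall (aestronglyMeasurable_cexp_mul hρ))
    (hnear.mono fun w hw => Filter.Eventually.of_forall (norm_cexp_mul_le hw.1 hw.2.le))
    (integrable_one_add_exp_mul_mul_abs hρ hb)
    (Filter.Eventually.of_forall fun ξ => ?_)
  exact (Continuous.continuousAt (by fun_prop)).continuousWithinAt.tendsto

end Strip

end FourierLaplace

theorem stmt17_general (a : ℝ)
    (ρ : ℝ → ℝ)
    (htr : Integrable ρ)
    (hexp : ∀ b ∈ Set.Ico (0:ℝ) (2 * a), Integrable (fun ξ => Real.exp (b * ξ) * ρ ξ)) :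
    DifferentiableOn ℂ (fun z : ℂ => ∫ ξ : ℝ, Complex.exp (-(Complex.I) * ξ * z) * ρ ξ)
      {z : ℂ | 0 < z.im ∧ z.im < 2 * a} ∧
    ContinuousOn (fun z : ℂ => ∫ ξ : ℝ, Complex.exp (-(Complex.I) * ξ * z) * ρ ξ)
      {z : ℂ | 0 ≤ z.im ∧ z.im < 2 * a} := by
  have hmid : ∀ z : ℂ, 0 ≤ z.im → z.im < 2 * a →
      z.im < (z.im + 2 * a) / 2 ∧ (z.im + 2 * a) / 2 ∈ Set.Ico (0 : ℝ) (2 * a) :=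
    fun z h0 h2 => ⟨by linarith, Set.mem_Ico.2 ⟨by linarith, by linarith⟩⟩
  refine ⟨fun z ⟨h0, h2⟩ => ?_, fun z ⟨h0, h2⟩ => ?_⟩
  · obtain ⟨hzb, hb⟩ := hmid z h0.le h2
    exact (FourierLaplace.differentiableAt_integral_cexp_mul htr (hexp _ hb) h0 hzb)
      |>.differentiableWithinAt
  · obtain ⟨hzb, hb⟩ := hmid z h0 h2
    exact (FourierLaplace.continuousWithinAt_integral_cexp_mul htr (hexp _ hb) hzb).mono
      fun w hw => hw.1

/-- Let `k(ξ,λ)` be the (Hermitian) momentum-space kernel of `K^{1/2}` for a positive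
trace-class operator `K`, so that `ρ(ξ) = ∫ |k(ξ,λ)|² dλ` is the momentum diagonal
density of `K` with `tr(K^{1/2} e^{bP} K^{1/2}) = ∫ e^{bξ} ρ(ξ) dξ < ∞` for
`0 ≤ b < 2a`.  Then `z ↦ tr(K^{1/2} e^{−iPz} K^{1/2}) = ∫ e^{−iξz} ρ(ξ) dξ` is analytic
in `0 < Im z < 2a` and continuous on `0 ≤ Im z < 2a`. -/
theorem stmt17 (a : ℝ) (ha : 0 < a) (k : ℝ → ℝ → ℂ)
    (hkm : Measurable (Function.uncurry k))
    (hherm : ∀ ξ lam : ℝ, k lam ξ = (starRingEnd ℂ) (k ξ lam))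
    (ρ : ℝ → ℝ) (hρ : ∀ ξ, ρ ξ = ∫ lam : ℝ, ‖k ξ lam‖ ^ 2)
    (htr : Integrable ρ)
    (hexp : ∀ b ∈ Set.Ico (0:ℝ) (2 * a), Integrable (fun ξ => Real.exp (b * ξ) * ρ ξ)) :
    DifferentiableOn ℂ (fun z : ℂ => ∫ ξ : ℝ, Complex.exp (-(Complex.I) * ξ * z) * ρ ξ)
      {z : ℂ | 0 < z.im ∧ z.im < 2 * a} ∧
    ContinuousOn (fun z : ℂ => ∫ ξ : ℝ, Complex.exp (-(Complex.I) * ξ * z) * ρ ξ)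
      {z : ℂ | 0 ≤ z.im ∧ z.im < 2 * a} :=
  stmt17_general a ρ htr hexp
end
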